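/- Let p be an odd prime, n ≥ 2, and G = (Z_{p^n} × Z_{p^n}) ⋊ Z_{p^{n-1}} with x acting by c ↦ c^{1+p}. Then for every automorphism φ of G and every c ∈ A = Z_{p^n} × Z_{p^n}, the element c⁻¹ φ(c) lies in A (i.e., φ(A) ⊆ A, A is characteristic in G). -/

import Mathlib

/-!
It suffices to show that a subgroup `B ≅ A` of `G` lies in `A`. Otherwise the image of `B` in the
cyclic group `G / A` is generated by the class of some `x ^ k` with `0 < k < p ^ (n - 1)`; with
`i = v_p(k)` this image has order at most `p ^ (n - 1 - i)`. As `B` is abelian, `B ∩ A` centralises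
`x ^ k`, which acts on `A` by `c ↦ c ^ (1 + p) ^ k`. Lifting the exponent gives
`v_p((1 + p) ^ k - 1) = i + 1`, so `B ∩ A` lies in the `p ^ (i + 1)`-torsion of `A ≅ (ℤ/p^n)²`,
which has at most `p ^ (2 (i + 1))` elements. Hence `p ^ (2 n) = |B| ≤ p ^ (n + i + 1)`,
contradicting `i < n - 1`.
-/

open Subgroup

theorem padicValNat_one_add_pow_sub_one {p k : ℕ} (hp : p.Prime) (hodd : Odd p) (hk : k ≠ 0) :
    padicValNat p ((1 + p) ^ k - 1) = padicValNat p k + 1 := by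
  have := Fact.mk hp
  have hndvd : ¬p ∣ 1 + p := by
    rw [Nat.dvd_add_left dvd_rfl]; exact hp.not_dvd_one
  simpa [padicValNat_self, add_comm] using
    padicValNat.pow_sub_pow (y := 1) hodd (by have := hp.pos; omega) (by simp) hndvd hk

theorem pow_pow_padicValNat_succ_eq_one {G : Type*} [Group G] {p m k : ℕ} (hp : p.Prime)
    (hodd : Odd p) (hk : k ≠ 0) {g : G} (hg : g ^ p ^ m = 1) (hfix : g ^ (1 + p) ^ k = g) :
    g ^ p ^ (padicValNat p k + 1) = 1 := by
  obtain ⟨t, -, ht⟩ := (Nat.dvd_prime_pow hp).1 (orderOf_dvd_of_pow_eq_one hg)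
  have hpos : 1 ≤ (1 + p) ^ k := Nat.one_le_pow _ _ (by omega)
  have hdvd : p ^ t ∣ (1 + p) ^ k - 1 := by
    rw [← ht, orderOf_dvd_iff_pow_eq_one, pow_sub _ hpos, hfix, pow_one, mul_inv_cancel]
  have hne : (1 + p) ^ k - 1 ≠ 0 := by
    have := Nat.one_lt_pow hk (by have := hp.pos; omega : 1 < 1 + p); omega
  have := Fact.mk hp
  have hle := (padicValNat_dvd_iff_le hne).1 hdvd
  rw [padicValNat_one_add_pow_sub_one hp hodd hk] at hle
  rw [← orderOf_dvd_iff_pow_eq_one, ht]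
  exact pow_dvd_pow p hle

theorem card_pow_eq_one_prod_le {C D : Type*} [Group C] [Group D] [Finite C] [Finite D]
    [IsCyclic C] [IsCyclic D] {d : ℕ} (hd : 0 < d) :
    Nat.card {g : C × D // g ^ d = 1} ≤ d * d := by
  classical
  have := Fintype.ofFinite C
  have := Fintype.ofFinite D
  have split : {g : C × D // g ^ d = 1} ≃ {c : C // c ^ d = 1} × {c : D // c ^ d = 1} :=
    (Equiv.subtypeEquivRight fun _ => by rw [Prod.ext_iff]; rfl).trans
      Equiv.subtypeProdEquivProd
  rw [Nat.card_congr split, Nat.card_prod, Nat.card_eq_fintype_card, Nat.card_eq_fintype_card,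
    Fintype.card_subtype, Fintype.card_subtype]
  exact Nat.mul_le_mul (IsCyclic.card_pow_eq_one_le hd) (IsCyclic.card_pow_eq_one_le hd)

theorem pow_pow_sub_eq_one_of_pow_dvd {M : Type*} [Monoid M] {y : M} {p N i k : ℕ}
    (hy : y ^ p ^ N = 1) (hik : p ^ i ∣ k) (hi : i ≤ N) : (y ^ k) ^ p ^ (N - i) = 1 := by
  obtain ⟨k', rfl⟩ := hik
  rw [← pow_mul, mul_right_comm, ← pow_add, Nat.add_sub_cancel' hi, pow_mul, hy, one_pow]

section ZModProd

variable {H : Type*} [Group H] {m : ℕ} (e : H ≃* Multiplicative (ZMod m × ZMod m))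
include e

theorem card_eq_of_mulEquiv_zmod_prod : Nat.card H = m * m := by
  rw [Nat.card_congr e.toEquiv, Nat.card_congr Multiplicative.toAdd, Nat.card_prod, Nat.card_zmod]

theorem commute_of_mulEquiv_zmod_prod (a b : H) : Commute a b := by
  simpa using (Commute.all (e a) (e b)).map e.symm

theorem card_pow_eq_one_le_of_mulEquiv_zmod_prod [NeZero m] {d : ℕ} (hd : 0 < d) :
    Nat.card {h : H // h ^ d = 1} ≤ d * d := by
  let e' := e.trans (MulEquiv.prodMultiplicative (ZMod m) (ZMod m))
  rw [Nat.card_congr (e'.toEquiv.subtypeEquiv (q := (· ^ d = 1)) fun h => by simp [← map_pow])]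
  exact card_pow_eq_one_prod_le hd

end ZModProd

section SemidirectProduct

variable {G : Type*} [Group G] {A : Subgroup G} {x : G}

theorem conj_pow_eq_pow_pow {r : ℕ} (hact : ∀ c ∈ A, x⁻¹ * c * x = c ^ r) (k : ℕ) {c : G}
    (hc : c ∈ A) : (x ^ k)⁻¹ * c * x ^ k = c ^ r ^ k := by
  induction k generalizing c with
  | zero => simp
  | succ k ih =>
    calc (x ^ (k + 1))⁻¹ * c * x ^ (k + 1) = x⁻¹ * ((x ^ k)⁻¹ * c * x ^ k) * x := by group
      _ = c ^ r ^ (k + 1) := by rw [ih hc, hact _ (A.pow_mem hc _), ← pow_mul, pow_succ]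

theorem exists_eq_mul_pow_lt_orderOf (hcompl : IsComplement' A (zpowers x))
    (hx : IsOfFinOrder x) (g : G) : ∃ a ∈ A, ∃ k < orderOf x, g = a * x ^ k := by
  classical
  obtain ⟨⟨a, z⟩, hg, -⟩ := hcompl.existsUnique g
  obtain ⟨k, hk, hz⟩ := Finset.mem_image.1 (hx.mem_zpowers_iff_mem_range_orderOf.1 z.2)
  exact ⟨a, a.2, k, Finset.mem_range.1 hk, by rw [← hg, hz]⟩

theorem isCyclic_quotient_of_isComplement' [A.Normal] (hcompl : IsComplement' A (zpowers x))
    (hx : IsOfFinOrder x) : IsCyclic (G ⧸ A) := ⟨⟨x, fun q => by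
  obtain ⟨g, rfl⟩ := QuotientGroup.mk_surjective q
  obtain ⟨a, ha, k, -, rfl⟩ := exists_eq_mul_pow_lt_orderOf hcompl hx g
  exact ⟨k, by simp [(QuotientGroup.eq_one_iff a).2 ha]⟩⟩⟩

variable {p : ℕ} (hp : p.Prime) (hodd : Odd p) (hact : ∀ c ∈ A, x⁻¹ * c * x = c ^ (1 + p))
include hp hodd hact

theorem pow_eq_one_of_commute_pow {m k : ℕ} (hk : k ≠ 0) {g : G} (hg : g ∈ A)
    (hgm : g ^ p ^ m = 1) (hcomm : Commute g (x ^ k)) : g ^ p ^ (padicValNat p k + 1) = 1 :=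
  pow_pow_padicValNat_succ_eq_one hp hodd hk hgm <| by
    rw [← conj_pow_eq_pow_pow hact k hg, mul_assoc, hcomm.eq, inv_mul_cancel_left]

theorem card_centralizer_pow_le {n k : ℕ}
    (e : A ≃* Multiplicative (ZMod (p ^ n) × ZMod (p ^ n))) (hk : k ≠ 0) :
    Nat.card {g : A // Commute (g : G) (x ^ k)} ≤
      p ^ (padicValNat p k + 1) * p ^ (padicValNat p k + 1) := by
  have : NeZero (p ^ n) := ⟨pow_ne_zero _ hp.ne_zero⟩
  have : Finite A := Finite.of_equiv _ e.symm.toEquiv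
  have horder (g : A) : (g : G) ^ p ^ (n + n) = 1 := by
    rw [pow_add, ← card_eq_of_mulEquiv_zmod_prod e, ← coe_pow, pow_card_eq_one', coe_one]
  refine le_trans
    (Nat.card_le_card_of_injective (β := {g : A // g ^ p ^ (padicValNat p k + 1) = 1})
      (fun g => ⟨g, Subtype.ext (pow_eq_one_of_commute_pow hp hodd hact hk g.1.2 (horder g) g.2)⟩)
      ?_)
    (card_pow_eq_one_le_of_mulEquiv_zmod_prod e (pow_pos hp.pos _))
  exact fun g₁ g₂ h => Subtype.ext (Subtype.mk.inj h)

theorem card_subgroupOf_le_of_mul_pow_mem {n k : ℕ}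
    (e : A ≃* Multiplicative (ZMod (p ^ n) × ZMod (p ^ n))) (hk : k ≠ 0) {B : Subgroup G}
    (hB : ∀ u ∈ B, ∀ v ∈ B, Commute u v) {a : G} (ha : a ∈ A) (hb : a * x ^ k ∈ B) :
    Nat.card (A.subgroupOf B) ≤ p ^ (padicValNat p k + 1) * p ^ (padicValNat p k + 1) := by
  have : NeZero (p ^ n) := ⟨pow_ne_zero _ hp.ne_zero⟩
  have : Finite A := Finite.of_equiv _ e.symm.toEquiv
  refine le_trans (Nat.card_le_card_of_injective (β := {g : A // Commute (g : G) (x ^ k)})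
    (fun g => ⟨⟨g, g.2⟩, ?_⟩) ?_) (card_centralizer_pow_le hp hodd hact e hk)
  · have hga : Commute (g : G) a :=
      (commute_of_mulEquiv_zmod_prod e ⟨g, g.2⟩ ⟨a, ha⟩).map A.subtype
    simpa using hga.inv_right.mul_right (hB g g.1.2 _ hb)
  · exact fun g₁ g₂ h => Subtype.ext (Subtype.ext (congrArg (fun y => (y.1 : G)) h))

theorem le_of_mulEquiv_of_isComplement' [A.Normal] {n : ℕ} (hcompl : IsComplement' A (zpowers x))
    (hx : orderOf x = p ^ (n - 1)) (e : A ≃* Multiplicative (ZMod (p ^ n) × ZMod (p ^ n)))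
    {B : Subgroup G} (eB : B ≃* A) : B ≤ A := by
  have hp0 := hp.pos
  have hB (u : G) (hu : u ∈ B) (v : G) (hv : v ∈ B) : Commute u v := by
    simpa using (commute_of_mulEquiv_zmod_prod (eB.trans e) ⟨u, hu⟩ ⟨v, hv⟩).map B.subtype
  have hfin : IsOfFinOrder x := orderOf_pos_iff.1 (hx ▸ pow_pos hp0 _)
  have := isCyclic_quotient_of_isComplement' hcompl hfin
  let ψ := (QuotientGroup.mk' A).comp B.subtype
  have hker : ψ.ker = A.subgroupOf B := by ext; exact QuotientGroup.eq_one_iff _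
  have hcardB : Nat.card (A.subgroupOf B) * Nat.card ψ.range = p ^ (n + n) := by
    rw [← hker, ← index_ker, card_mul_index, card_eq_of_mulEquiv_zmod_prod (eB.trans e),
      pow_add]
  by_contra hBA
  obtain ⟨⟨_, b, rfl⟩, hq⟩ := IsCyclic.exists_ofOrder_eq_natCard (α := ψ.range)
  replace hq : orderOf (ψ b) = Nat.card ψ.range := (orderOf_coe _).trans hq
  obtain ⟨a, ha, k, hk, hb⟩ := exists_eq_mul_pow_lt_orderOf hcompl hfin b
  have hψb : ψ b = QuotientGroup.mk (x ^ k) := by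
    simp [ψ, hb, (QuotientGroup.eq_one_iff a).2 ha]
  have hk0 : k ≠ 0 := by
    rintro rfl
    have hψ1 : ψ = 1 := MonoidHom.range_eq_bot_iff.1 (card_eq_one.1 (by rw [← hq, hψb]; simp))
    exact hBA (subgroupOf_eq_top.1 (hker ▸ MonoidHom.ker_eq_top_iff.2 hψ1))
  set i := padicValNat p k
  have hik : p ^ i ∣ k := pow_padicValNat_dvd
  have hi : i < n - 1 := (Nat.pow_lt_pow_iff_right hp.one_lt).1 <|
    (Nat.le_of_dvd (Nat.pos_of_ne_zero hk0) hik).trans_lt (hx ▸ hk)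
  have hrange : Nat.card ψ.range ≤ p ^ (n - 1 - i) := by
    have hxn : (x : G ⧸ A) ^ p ^ (n - 1) = 1 := by
      rw [← hx, ← QuotientGroup.mk_pow, pow_orderOf_eq_one, QuotientGroup.mk_one]
    rw [← hq, hψb, QuotientGroup.mk_pow]
    exact Nat.le_of_dvd (by positivity)
      (orderOf_dvd_of_pow_eq_one (pow_pow_sub_eq_one_of_pow_dvd hxn hik hi.le))
  have hsub := card_subgroupOf_le_of_mul_pow_mem hp hodd hact e hk0 hB ha (hb ▸ b.2)
  have := Nat.mul_le_mul hsub hrange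
  rw [hcardB, ← pow_add, ← pow_add] at this
  have := (Nat.pow_le_pow_iff_right hp.one_lt).1 this
  omega

end SemidirectProduct

theorem A_is_characteristic_general (p n : ℕ) (hp : p.Prime) (hodd : Odd p)
    (G : Type*) [Group G] (A : Subgroup G) (x : G)
    (hAnorm : A.Normal)
    (hcompl : Subgroup.IsComplement' A (Subgroup.zpowers x))
    (hAiso : Nonempty (A ≃* Multiplicative (ZMod (p ^ n) × ZMod (p ^ n))))
    (hx : orderOf x = p ^ (n - 1))
    (hact : ∀ c ∈ A, x⁻¹ * c * x = c ^ (1 + p)) :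
    ∀ φ : G ≃* G, ∀ c ∈ A, c⁻¹ * φ c ∈ A := by
  intro φ c hc
  obtain ⟨e⟩ := hAiso
  have hφA : A.map φ.toMonoidHom ≤ A := le_of_mulEquiv_of_isComplement' hp hodd hact hcompl hx e
    (A.equivMapOfInjective _ φ.injective).symm
  exact A.mul_mem (A.inv_mem hc) (hφA ⟨c, hc, rfl⟩)

/-- Let `p` be an odd prime, `n ≥ 2`, and `G = A ⋊ ⟨x⟩` where `A ≅ Z_{p^n} × Z_{p^n}`,
`x` has order `p^{n-1}` and acts on `A` by `c ↦ c^{1+p}`.  Then for every automorphism `φ`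
of `G` and every `c ∈ A`, the element `c⁻¹ φ(c)` lies in `A` (i.e. `A` is characteristic). -/
theorem A_is_characteristic (p n : ℕ) (hp : p.Prime) (hodd : Odd p)
    (hn : 2 ≤ n) (G : Type*) [Group G] [Finite G] (A : Subgroup G) (x : G)
    (hAnorm : A.Normal)
    (hcompl : Subgroup.IsComplement' A (Subgroup.zpowers x))
    (hAiso : Nonempty (A ≃* Multiplicative (ZMod (p ^ n) × ZMod (p ^ n))))
    (hx : orderOf x = p ^ (n - 1))
    (hact : ∀ c ∈ A, x⁻¹ * c * x = c ^ (1 + p)) :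
    ∀ φ : G ≃* G, ∀ c ∈ A, c⁻¹ * φ c ∈ A :=
  A_is_characteristic_general p n hp hodd G A x hAnorm hcompl hAiso hx hact
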